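/- arXiv:0706.1785 — 2 statements merged into one kernel-verified Lean document; each statement's English description precedes it below -/
import Mathlib

section
/- Let B be the union of all su(2) blocks for ψ and let b be the number of qubits in B. Then dim_ℝ(K_ψ ∩ ḡ_B) ≤ n − b. -/
open scoped Matrix

noncomputable section

/-- The `n`-qubit Hilbert space `(ℂ²)^{⊗n}`, realized as functions `(Fin n → Fin 2) → ℂ`. -/
abbrev QState (n : ℕ) := (Fin n → Fin 2) → ℂ

/-- The ambient real vector space `ℝ × (Fin n → M₂(ℂ))` containing `u(1) ⊕ su(2)^n`. -/
abbrev GV (n : ℕ) := ℝ × (Fin n → Matrix (Fin 2) (Fin 2) ℂ)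

/-- `su(2)`: traceless skew-Hermitian `2 × 2` complex matrices, as a real subspace. -/
def su2 : Submodule ℝ (Matrix (Fin 2) (Fin 2) ℂ) where
  carrier := {X | Xᴴ = -X ∧ X.trace = 0}
  add_mem' := by
    rintro X Y ⟨hX1, hX2⟩ ⟨hY1, hY2⟩
    exact ⟨by rw [Matrix.conjTranspose_add, hX1, hY1, neg_add],
           by rw [Matrix.trace_add, hX2, hY2, add_zero]⟩
  zero_mem' := ⟨by simp, by simp⟩
  smul_mem' := by
    rintro r X ⟨hX1, hX2⟩
    exact ⟨by rw [Matrix.conjTranspose_smul, hX1, star_trivial, smul_neg],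
           by rw [Matrix.trace_smul, hX2, smul_zero]⟩

/-- The Lie algebra `g = u(1) ⊕ su(2)^n` as a real subspace of `GV n`. -/
def gSub (n : ℕ) : Submodule ℝ (GV n) :=
  (⊤ : Submodule ℝ ℝ).prod (Submodule.pi Set.univ fun _ => su2)

/-- `g_S`: elements `(0, X)` of `g` with `X j = 0` for `j ∉ S`. -/
def gS {n : ℕ} (S : Set (Fin n)) : Submodule ℝ (GV n) :=
  (⊥ : Submodule ℝ ℝ).prod (Submodule.pi Set.univ fun j =>
    letI := Classical.dec (j ∈ S)
    if j ∈ S then su2 else ⊥)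

/-- `ḡ_S`: elements `(t, X)` of `g` with `X j = 0` for `j ∈ S`. -/
def gBar {n : ℕ} (S : Set (Fin n)) : Submodule ℝ (GV n) :=
  (⊤ : Submodule ℝ ℝ).prod (Submodule.pi Set.univ fun j =>
    letI := Classical.dec (j ∈ S)
    if j ∈ S then (⊥ : Submodule ℝ (Matrix (Fin 2) (Fin 2) ℂ)) else su2)

/-- The projection `P_j : g → su(2)`, `(t, X) ↦ X j`. -/
def Pj {n : ℕ} (j : Fin n) : GV n →ₗ[ℝ] Matrix (Fin 2) (Fin 2) ℂ :=
  (LinearMap.proj j).comp (LinearMap.snd ℝ ℝ (Fin n → Matrix (Fin 2) (Fin 2) ℂ))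

/-- Apply the matrix `X` to qubit `j` of the state `ψ`. -/
def applySingle {n : ℕ} (j : Fin n) (X : Matrix (Fin 2) (Fin 2) ℂ) (ψ : QState n) : QState n :=
  fun I => ∑ k : Fin 2, X (I j) k * ψ (Function.update I j k)

/-- The infinitesimal local-unitary action: `dΦ_ψ(t, X) = i t ψ + Σ_j X_j ψ`. -/
def dPhi {n : ℕ} (ψ : QState n) : GV n →ₗ[ℝ] QState n where
  toFun x := fun I => Complex.I * (x.1 : ℂ) * ψ I + ∑ j, applySingle j (x.2 j) ψ I
  map_add' x y := by
    funext I
    simp only [applySingle, Prod.fst_add, Prod.snd_add, Pi.add_apply, Matrix.add_apply,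
      Complex.ofReal_add, add_mul, Finset.sum_add_distrib]
    ring
  map_smul' r x := by
    funext I
    simp only [applySingle, Prod.smul_fst, Prod.smul_snd, Pi.smul_apply, Matrix.smul_apply,
      smul_eq_mul, Complex.real_smul, Complex.ofReal_mul, RingHom.id_apply,
      Finset.mul_sum, mul_add]
    congr 1
    · ring
    · refine Finset.sum_congr rfl fun j _ => Finset.sum_congr rfl fun k _ => by ring

/-- The stabilizer subalgebra `K_ψ = {(t,X) ∈ g : dΦ_ψ(t,X) = 0}`. -/
def stab {n : ℕ} (ψ : QState n) : Submodule ℝ (GV n) :=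
  gSub n ⊓ LinearMap.ker (dPhi ψ)

/-- The componentwise bracket on `g` (zero in the `u(1)` component). -/
def gBracket {n : ℕ} (x y : GV n) : GV n :=
  (0, fun j => ⁅x.2 j, y.2 j⁆)

/-- An `su(2)` block for `ψ`: a set `S` of qubits with `dim (K_ψ ∩ g_S) > 1` and
`dim (K_ψ ∩ g_{S'}) = 0` for every proper subset `S' ⊊ S`. -/
def Su2Block {n : ℕ} (ψ : QState n) (S : Set (Fin n)) : Prop :=
  1 < Module.finrank ℝ ↥(stab ψ ⊓ gS S) ∧
  ∀ S' : Set (Fin n), S' ⊂ S → Module.finrank ℝ ↥(stab ψ ⊓ gS S') = 0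

/-- The union `B` of all `su(2)` blocks for `ψ`. -/
def blockUnion {n : ℕ} (ψ : QState n) : Set (Fin n) :=
  {q | ∃ S : Set (Fin n), Su2Block ψ S ∧ q ∈ S}

/-- The number `p` of `su(2)` blocks for `ψ`. -/
def blockCount {n : ℕ} (ψ : QState n) : ℕ :=
  {S : Set (Fin n) | Su2Block ψ S}.ncard

/-- `ψ` factors across the set `S` of qubits: `ψ(I) = φ(I|_S) · χ(I|_{Sᶜ})`. -/
def FactorsAcross {n : ℕ} (ψ : QState n) (S : Set (Fin n)) : Prop :=
  ∃ (φ : (↥S → Fin 2) → ℂ) (χ : (↥(Sᶜ) → Fin 2) → ℂ),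
    ∀ I : Fin n → Fin 2, ψ I = φ (fun j => I j.1) * χ (fun j => I j.1)

/-- `ψ` is a nonproduct state: it factors across no proper nonempty set of qubits. -/
def IsNonproduct {n : ℕ} (ψ : QState n) : Prop :=
  ∀ S : Set (Fin n), S ≠ ∅ → S ≠ Set.univ → ¬ FactorsAcross ψ S

/-- `ψ` has a single-qubit factor. -/
def HasSingleQubitFactor {n : ℕ} (ψ : QState n) : Prop :=
  ∃ j : Fin n, FactorsAcross ψ {j}

/-- Apply the local unitary (or just local linear) transformation `⊗_j U_j` to `ψ`. -/
def luApply {n : ℕ} (U : Fin n → Matrix (Fin 2) (Fin 2) ℂ) (ψ : QState n) : QState n :=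
  fun I => ∑ J : Fin n → Fin 2, (∏ j, U j (I j) (J j)) * ψ J

/-- Local unitary equivalence of `n`-qubit states. -/
def LUEquiv {n : ℕ} (ψ ψ' : QState n) : Prop :=
  ∃ U : Fin n → Matrix (Fin 2) (Fin 2) ℂ,
    (∀ j, U j ∈ Matrix.unitaryGroup (Fin 2) ℂ) ∧ ψ' = luApply U ψ

/-- The two-qubit singlet state `φ(a,b) = δ_{a0} δ_{b1} − δ_{a1} δ_{b0}`. -/
def singletFn : Fin 2 → Fin 2 → ℂ := fun a b =>
  if a = 0 ∧ b = 1 then 1 else if a = 1 ∧ b = 0 then -1 else 0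

/-- `ψ` has a singlet factor: it is LU-equivalent to a state that factors across a
two-element set of qubits, with the two-qubit factor being the singlet. -/
def HasSingletFactor {n : ℕ} (ψ : QState n) : Prop :=
  ∃ ψ' : QState n, LUEquiv ψ ψ' ∧ ∃ j k : Fin n, j ≠ k ∧
    ∃ χ : (↥(({j, k} : Set (Fin n))ᶜ) → Fin 2) → ℂ,
      ∀ I : Fin n → Fin 2, ψ' I = singletFn (I j) (I k) * χ (fun q => I q.1)

/-- The matrix `A = diag(i, −i) ∈ su(2)`. -/
def matA : Matrix (Fin 2) (Fin 2) ℂ := !![Complex.I, 0; 0, -Complex.I]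

/-- The generalized `n`-qubit GHZ state `α|0…0⟩ + β|1…1⟩`. -/
def ghz (n : ℕ) (α β : ℂ) : QState n := fun I =>
  if ∀ j, I j = 0 then α else if ∀ j, I j = 1 then β else 0

/-!
Every two elements of `K_ψ ∩ ḡ_B` commute qubitwise. Otherwise their bracket is a nonzero
element of `K_ψ` supported off `B` and off the qubits on which all of `K_ψ` commutes. A minimal
support `T` of such an element is not an `su(2)` block (it misses `B`), so `K_ψ ∩ g_T = ℝ z` is
a line; as `⁅z, w⁆ ∈ ℝ z` is trace-orthogonal to `z`, every `w ∈ K_ψ` commutes with `z` on `T`,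
so all of `K_ψ` commutes on `T`, a contradiction. A commuting subspace of `su(2)` is at most a
line, and for `ψ ≠ 0` an element of `K_ψ ∩ ḡ_B` is determined by its components off `B`,
which gives at most `n − b` dimensions.
-/

local notation "M2" => Matrix (Fin 2) (Fin 2) ℂ

theorem Submodule.finrank_le_sum_finrank_map {K V W ι : Type*} [Field K] [AddCommGroup V]
    [Module K V] [AddCommGroup W] [Module K W] [FiniteDimensional K W] [Fintype ι]
    (P : Submodule K V) (f : ι → V →ₗ[K] W) (hf : ∀ x ∈ P, (∀ i, f i x = 0) → x = 0) :
    Module.finrank K P ≤ ∑ i, Module.finrank K (P.map (f i)) := by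
  let g : P →ₗ[K] ((i : ι) → P.map (f i)) := LinearMap.pi fun i =>
    ((f i).comp P.subtype).codRestrict _ fun x => Submodule.mem_map_of_mem x.2
  have hg : Function.Injective g := by
    refine (injective_iff_map_eq_zero g).mpr fun x hx => Subtype.ext (hf x x.2 fun i => ?_)
    exact congrArg Subtype.val (congrFun hx i)
  simpa only [Module.finrank_pi_fintype] using LinearMap.finrank_le_finrank_of_injective hg

namespace su2

variable {A B : M2}

open scoped ComplexOrder in
lemma trace_mul_self_ne_zero (hA : A ∈ su2) (h0 : A ≠ 0) : (A * A).trace ≠ 0 := by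
  have h : A * A = -(Aᴴ * A) := by rw [hA.1, Matrix.neg_mul, neg_neg]
  rw [h, Matrix.trace_neg, neg_ne_zero, Ne, Matrix.trace_conjTranspose_mul_self_eq_zero_iff]
  exact h0

lemma trace_mul_eq_ofReal_re (hA : A ∈ su2) (hB : B ∈ su2) :
    (A * B).trace = ((A * B).trace.re : ℂ) := by
  have h : star (A * B).trace = (A * B).trace := by
    rw [← Matrix.trace_conjTranspose, Matrix.conjTranspose_mul, hA.1, hB.1, neg_mul_neg,
      Matrix.trace_mul_comm]
  exact (Complex.conj_eq_iff_re.mp h).symm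

lemma mul_add_mul_eq_trace_smul (hA : A.trace = 0) (hB : B.trace = 0) :
    A * B + B * A = (A * B).trace • (1 : M2) := by
  rw [Matrix.trace_fin_two] at hA hB
  have hA' : A 1 1 = -A 0 0 := by linear_combination hA
  have hB' : B 1 1 = -B 0 0 := by linear_combination hB
  ext i j
  fin_cases i <;> fin_cases j <;>
    simp [Matrix.mul_apply, Matrix.trace_fin_two, hA', hB'] <;> ring

lemma exists_eq_smul_of_commute (hA : A ∈ su2) (hB : B ∈ su2) (h0 : B ≠ 0)
    (hAB : Commute A B) : ∃ r : ℝ, A = r • B := by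
  have hAB' : (2 : ℂ) • (A * B) = (A * B).trace • 1 := by
    rw [two_smul, ← mul_add_mul_eq_trace_smul hA.2 hB.2, hAB.eq]
  have hBB : (2 : ℂ) • (B * B) = (B * B).trace • 1 := by
    rw [two_smul, mul_add_mul_eq_trace_smul hB.2 hB.2]
  have key : (B * B).trace • A = (A * B).trace • B := by
    have := congrArg (· * B) hAB'
    simp only [Matrix.smul_mul, Matrix.one_mul, mul_assoc] at this
    rwa [← Matrix.mul_smul, hBB, Matrix.mul_smul, Matrix.mul_one] at this
  have hBB0 : (B * B).trace.re ≠ 0 := fun h =>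
    trace_mul_self_ne_zero hB h0 (by rw [trace_mul_eq_ofReal_re hB hB, h, Complex.ofReal_zero])
  refine ⟨(A * B).trace.re / (B * B).trace.re, ?_⟩
  rw [trace_mul_eq_ofReal_re hB hB, trace_mul_eq_ofReal_re hA hB, Complex.coe_smul,
    Complex.coe_smul] at key
  rw [div_eq_inv_mul, mul_smul, ← key, smul_smul, inv_mul_cancel₀ hBB0, one_smul]

lemma lie_mem (hA : A ∈ su2) (hB : B ∈ su2) : ⁅A, B⁆ ∈ su2 := by
  refine ⟨?_, ?_⟩
  · rw [Ring.lie_def, Matrix.conjTranspose_sub, Matrix.conjTranspose_mul,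
      Matrix.conjTranspose_mul, hA.1, hB.1, neg_mul_neg, neg_mul_neg, neg_sub]
  · rw [Ring.lie_def, Matrix.trace_sub, Matrix.trace_mul_comm, sub_self]

lemma eq_zero_of_lie_eq_smul (hA : A ∈ su2) (h0 : A ≠ 0) {r : ℝ} (h : ⁅A, B⁆ = r • A) :
    r = 0 := by
  have htr := congrArg (fun M => (M * A).trace) h
  simp only [Ring.lie_def, sub_mul, Matrix.trace_sub, Matrix.smul_mul, Matrix.trace_smul] at htr
  rw [mul_assoc, Matrix.trace_mul_comm A, sub_self] at htr
  exact (smul_eq_zero.mp htr.symm).resolve_right (trace_mul_self_ne_zero hA h0)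

lemma finrank_le_one_of_commute {V : Submodule ℝ M2} (hV : V ≤ su2)
    (hcomm : ∀ A ∈ V, ∀ B ∈ V, Commute A B) : Module.finrank ℝ V ≤ 1 := by
  by_cases hV0 : V = ⊥
  · rw [hV0, finrank_bot]
    exact zero_le_one
  obtain ⟨u, hu, hu0⟩ := (Submodule.ne_bot_iff V).mp hV0
  have hle : V ≤ Submodule.span ℝ {u} := fun A hA => by
    obtain ⟨r, rfl⟩ := exists_eq_smul_of_commute (hV hA) (hV hu) hu0 (hcomm A hA u hu)
    exact Submodule.smul_mem _ r (Submodule.mem_span_singleton_self u)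
  exact (Submodule.finrank_mono hle).trans (finrank_span_singleton hu0).le

end su2

section LocalAction

variable {n : ℕ}

def qubitOp (j : Fin n) (X : M2) : Module.End ℂ (QState n) where
  toFun := applySingle j X
  map_add' φ χ := by
    funext I
    simp only [applySingle, Pi.add_apply, mul_add, Finset.sum_add_distrib]
  map_smul' c φ := by
    funext I
    simp only [applySingle, Pi.smul_apply, smul_eq_mul, RingHom.id_apply, Finset.mul_sum]
    exact Finset.sum_congr rfl fun k _ => by ring

lemma qubitOp_apply (j : Fin n) (X : M2) (φ : QState n) : qubitOp j X φ = applySingle j X φ :=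
  rfl

lemma qubitOp_sub (j : Fin n) (X Y : M2) : qubitOp j (X - Y) = qubitOp j X - qubitOp j Y := by
  refine LinearMap.ext fun φ => funext fun I => ?_
  simp only [qubitOp_apply, applySingle, LinearMap.sub_apply, Matrix.sub_apply, sub_mul,
    Pi.sub_apply, Finset.sum_sub_distrib]

lemma qubitOp_mul (j : Fin n) (X Y : M2) : qubitOp j (X * Y) = qubitOp j X * qubitOp j Y := by
  refine LinearMap.ext fun φ => funext fun I => ?_
  simp only [Module.End.mul_apply, qubitOp_apply, applySingle, Function.update_self,
    Function.update_idem, Matrix.mul_apply, Finset.mul_sum, Finset.sum_mul]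
  rw [Finset.sum_comm]
  exact Finset.sum_congr rfl fun m _ => Finset.sum_congr rfl fun k _ => by ring

lemma commute_qubitOp {j k : Fin n} (h : j ≠ k) (X Y : M2) :
    Commute (qubitOp j X) (qubitOp k Y) := by
  refine LinearMap.ext fun φ => funext fun I => ?_
  simp only [Module.End.mul_apply, qubitOp_apply, applySingle, Function.update_of_ne h.symm,
    Function.update_of_ne h, Function.update_comm h, Finset.mul_sum]
  rw [Finset.sum_comm]
  exact Finset.sum_congr rfl fun m _ => Finset.sum_congr rfl fun l _ => by ring

def localAction (x : GV n) : Module.End ℂ (QState n) :=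
  (Complex.I * x.1) • 1 + ∑ j, qubitOp j (x.2 j)

lemma dPhi_eq_localAction (ψ : QState n) (x : GV n) : dPhi ψ x = localAction x ψ := by
  funext I
  simp [dPhi, localAction, qubitOp_apply, Finset.sum_apply]

lemma commutator_add_of_central {R : Type*} [Ring R] {a b : R} (ha : ∀ T, Commute a T)
    (hb : ∀ T, Commute b T) (P Q : R) :
    (a + P) * (b + Q) - (b + Q) * (a + P) = P * Q - Q * P := by
  simp only [add_mul, mul_add, (ha b).eq, (ha Q).eq, (hb P).eq]
  abel

lemma localAction_gBracket (x y : GV n) :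
    localAction (gBracket x y) = localAction x * localAction y - localAction y * localAction x := by
  have hscalar : ∀ (c : ℂ) (T : Module.End ℂ (QState n)), Commute (c • 1) T :=
    fun c T => (Commute.one_left T).smul_left c
  have hdiag : ∀ j, ∑ k, (qubitOp j (x.2 j) * qubitOp k (y.2 k) -
      qubitOp k (y.2 k) * qubitOp j (x.2 j)) =
      qubitOp j (x.2 j) * qubitOp j (y.2 j) - qubitOp j (y.2 j) * qubitOp j (x.2 j) :=
    fun j => Finset.sum_eq_single j
      (fun k _ hk => sub_eq_zero.mpr (commute_qubitOp (Ne.symm hk) _ _).eq)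
      (fun h => absurd (Finset.mem_univ j) h)
  unfold localAction
  rw [commutator_add_of_central (hscalar _) (hscalar _), Finset.sum_mul_sum, Finset.sum_mul_sum,
    Finset.sum_comm (f := fun j k => qubitOp j (y.2 j) * qubitOp k (x.2 k))]
  simp only [gBracket, Complex.ofReal_zero, mul_zero, zero_smul, zero_add,
    Ring.lie_def, qubitOp_sub, qubitOp_mul, ← Finset.sum_sub_distrib, hdiag]

end LocalAction

section Stabilizer

variable {n : ℕ} {ψ : QState n}

lemma mem_stab_iff {x : GV n} : x ∈ stab ψ ↔ (∀ k, x.2 k ∈ su2) ∧ dPhi ψ x = 0 := by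
  simp [stab, gSub, Submodule.mem_prod, Submodule.mem_pi]

lemma gBracket_mem_stab {x y : GV n} (hx : x ∈ stab ψ) (hy : y ∈ stab ψ) :
    gBracket x y ∈ stab ψ := by
  rw [mem_stab_iff] at hx hy ⊢
  refine ⟨fun k => su2.lie_mem (hx.1 k) (hy.1 k), ?_⟩
  rw [dPhi_eq_localAction] at hx hy ⊢
  rw [localAction_gBracket, LinearMap.sub_apply, Module.End.mul_apply, Module.End.mul_apply,
    hx.2, hy.2, map_zero, map_zero, sub_zero]

lemma mem_gS_iff {S : Set (Fin n)} {x : GV n} :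
    x ∈ gS S ↔ x.1 = 0 ∧ (∀ k ∈ S, x.2 k ∈ su2) ∧ ∀ k ∉ S, x.2 k = 0 := by
  simp only [gS, Submodule.mem_prod, Submodule.mem_bot, Submodule.mem_pi, Set.mem_univ,
    true_implies]
  refine and_congr_right fun _ => ⟨fun h => ⟨fun k hk => ?_, fun k hk => ?_⟩, fun h k => ?_⟩
  · simpa [hk] using h k
  · simpa [hk] using h k
  · by_cases hk : k ∈ S <;> simp [hk, h.1, h.2]

lemma mem_gBar_iff {S : Set (Fin n)} {x : GV n} :
    x ∈ gBar S ↔ (∀ k ∉ S, x.2 k ∈ su2) ∧ ∀ k ∈ S, x.2 k = 0 := by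
  simp only [gBar, Submodule.mem_prod, Submodule.mem_top, true_and, Submodule.mem_pi,
    Set.mem_univ, true_implies]
  refine ⟨fun h => ⟨fun k hk => ?_, fun k hk => ?_⟩, fun h k => ?_⟩
  · simpa [hk] using h k
  · simpa [hk] using h k
  · by_cases hk : k ∈ S <;> simp [hk, h.1, h.2]

lemma mem_stab_inf_gS_iff {S : Set (Fin n)} {x : GV n} :
    x ∈ stab ψ ⊓ gS S ↔ x ∈ stab ψ ∧ x.1 = 0 ∧ ∀ k ∉ S, x.2 k = 0 := by
  rw [Submodule.mem_inf, mem_gS_iff]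
  exact ⟨fun ⟨hx, h1, _, h2⟩ => ⟨hx, h1, h2⟩,
    fun ⟨hx, h1, h2⟩ => ⟨hx, h1, fun k _ => (mem_stab_iff.mp hx).1 k, h2⟩⟩

lemma stab_inf_gS_empty : stab ψ ⊓ gS (∅ : Set (Fin n)) = ⊥ := by
  refine (Submodule.eq_bot_iff _).mpr fun x hx => ?_
  obtain ⟨-, h1, h2⟩ := mem_stab_inf_gS_iff.mp hx
  exact Prod.ext h1 (funext fun k => h2 k (Set.notMem_empty k))

lemma gBracket_mem_stab_inf_gS {S : Set (Fin n)} {x y : GV n} (hx : x ∈ stab ψ)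
    (hy : y ∈ stab ψ) (hS : ∀ k ∉ S, Commute (x.2 k) (y.2 k)) :
    gBracket x y ∈ stab ψ ⊓ gS S :=
  mem_stab_inf_gS_iff.mpr
    ⟨gBracket_mem_stab hx hy, rfl, fun k hk => commute_iff_lie_eq.mp (hS k hk)⟩

lemma eq_zero_of_mem_stab_of_snd_eq_zero (hψ : ψ ≠ 0) {x : GV n} (hx : x ∈ stab ψ)
    (h2 : x.2 = 0) : x = 0 := by
  obtain ⟨I, hI⟩ := Function.ne_iff.mp hψ
  have h := congrFun (mem_stab_iff.mp hx).2 I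
  simp only [dPhi, LinearMap.coe_mk, AddHom.coe_mk, h2, Pi.zero_apply, applySingle,
    Matrix.zero_apply, zero_mul, Finset.sum_const_zero, add_zero, mul_eq_zero,
    Complex.I_ne_zero, Complex.ofReal_eq_zero, false_or] at h
  exact Prod.ext (h.resolve_right hI) h2

end Stabilizer

section Blocks

variable {n : ℕ} {ψ : QState n}

lemma commute_of_minimal_of_finrank_le_one {T : Set (Fin n)} (hne : stab ψ ⊓ gS T ≠ ⊥)
    (hmin : ∀ T' ⊂ T, stab ψ ⊓ gS T' = ⊥) (hdim : Module.finrank ℝ ↥(stab ψ ⊓ gS T) ≤ 1)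
    {k : Fin n} (hk : k ∈ T) {x y : GV n} (hx : x ∈ stab ψ) (hy : y ∈ stab ψ) :
    Commute (x.2 k) (y.2 k) := by
  obtain ⟨z, hz, hz0⟩ := (Submodule.ne_bot_iff _).mp hne
  obtain ⟨hzstab, hz1, hzT⟩ := mem_stab_inf_gS_iff.mp hz
  have hzsu2 : ∀ k, z.2 k ∈ su2 := (mem_stab_iff.mp hzstab).1
  have hzk : z.2 k ≠ 0 := fun hzk => hz0 <| by
    have hz' : z ∈ stab ψ ⊓ gS (T \ {k}) := mem_stab_inf_gS_iff.mpr ⟨hzstab, hz1, fun l hl => by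
      by_cases hlT : l ∈ T
      · rwa [Set.mem_singleton_iff.mp (not_not.mp fun h => hl ⟨hlT, h⟩)]
      · exact hzT l hlT⟩
    rwa [hmin _ (Set.sdiff_singleton_ssubset.mpr hk)] at hz'
  have hline : stab ψ ⊓ gS T = Submodule.span ℝ {z} :=
    (Submodule.eq_of_le_of_finrank_le ((Submodule.span_singleton_le_iff_mem _ _).mpr hz)
      (hdim.trans (finrank_span_singleton hz0).ge)).symm
  -- `z` spans `K_ψ ∩ g_T`, and `⁅z, w⁆` lies there but is trace-orthogonal to `z` at `k`.
  have hcomm : ∀ w ∈ stab ψ, Commute (w.2 k) (z.2 k) := fun w hw => by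
    have hbr := gBracket_mem_stab_inf_gS (S := T) hzstab hw
      fun l hl => by rw [hzT l hl]; exact Commute.zero_left _
    rw [hline, Submodule.mem_span_singleton] at hbr
    obtain ⟨r, hr⟩ := hbr
    have hrk : ⁅z.2 k, w.2 k⁆ = r • z.2 k := (congrFun (congrArg Prod.snd hr) k).symm
    rw [su2.eq_zero_of_lie_eq_smul (hzsu2 k) hzk hrk, zero_smul, ← commute_iff_lie_eq] at hrk
    exact hrk.symm
  obtain ⟨a, ha⟩ := su2.exists_eq_smul_of_commute ((mem_stab_iff.mp hx).1 k) (hzsu2 k) hzk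
    (hcomm x hx)
  obtain ⟨b, hb⟩ := su2.exists_eq_smul_of_commute ((mem_stab_iff.mp hy).1 k) (hzsu2 k) hzk
    (hcomm y hy)
  rw [ha, hb]
  exact ((Commute.refl _).smul_left a).smul_right b

lemma commute_of_mem_stab_inf_gBar_blockUnion {x y : GV n}
    (hx : x ∈ stab ψ ⊓ gBar (blockUnion ψ)) (hy : y ∈ stab ψ ⊓ gBar (blockUnion ψ))
    (j : Fin n) : Commute (x.2 j) (y.2 j) := by
  set B := blockUnion ψ
  set D : Set (Fin n) := {k | ∀ a ∈ stab ψ, ∀ b ∈ stab ψ, Commute (a.2 k) (b.2 k)}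
  by_contra hxy
  have hxB : ∀ k ∈ B, x.2 k = 0 := (mem_gBar_iff.mp (Submodule.mem_inf.mp hx).2).2
  have hbr : gBracket x y ∈ stab ψ ⊓ gS (Bᶜ ∩ Dᶜ) :=
    gBracket_mem_stab_inf_gS hx.1 hy.1 fun k hk => by
      rcases not_and_or.mp hk with hkB | hkD
      · rw [hxB k (not_not.mp hkB)]
        exact Commute.zero_left _
      · exact not_not.mp hkD x hx.1 y hy.1
  have hbr0 : gBracket x y ≠ 0 := fun h =>
    hxy (commute_iff_lie_eq.mpr (congrFun (congrArg Prod.snd h) j))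
  obtain ⟨T, hTsub, hTmin⟩ := exists_minimal_le_of_wellFoundedLT
    (fun T => stab ψ ⊓ gS T ≠ ⊥) _ ((Submodule.ne_bot_iff _).mpr ⟨_, hbr, hbr0⟩)
  have hproper : ∀ T' ⊂ T, stab ψ ⊓ gS T' = ⊥ := fun T' h =>
    not_not.mp (hTmin.not_prop_of_lt h)
  obtain ⟨k, hk⟩ : T.Nonempty := Set.nonempty_iff_ne_empty.mpr fun h =>
    hTmin.1 (h ▸ stab_inf_gS_empty)
  rcases le_or_gt (Module.finrank ℝ ↥(stab ψ ⊓ gS T)) 1 with hdim | hdim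
  · exact (hTsub hk).2 fun a ha b hb =>
      commute_of_minimal_of_finrank_le_one hTmin.1 hproper hdim hk ha hb
  · exact (hTsub hk).1 ⟨T, ⟨hdim, fun T' h => by rw [hproper T' h, finrank_bot]⟩, hk⟩

lemma finrank_map_Pj_stab_inf_gBar_le_one (j : Fin n) :
    Module.finrank ℝ ↥((stab ψ ⊓ gBar (blockUnion ψ)).map (Pj j)) ≤ 1 := by
  refine su2.finrank_le_one_of_commute ?_ ?_
  · rintro _ ⟨x, hx, rfl⟩
    exact (mem_stab_iff.mp (Submodule.mem_inf.mp hx).1).1 j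
  · rintro _ ⟨x, hx, rfl⟩ _ ⟨y, hy, rfl⟩
    exact commute_of_mem_stab_inf_gBar_blockUnion hx hy j

end Blocks

theorem stmt8_general {n : ℕ} (ψ : QState n) (hψ : ψ ≠ 0) :
    Module.finrank ℝ ↥(stab ψ ⊓ gBar (blockUnion ψ)) ≤ n - (blockUnion ψ).ncard := by
  classical
  set B := blockUnion ψ
  have hinj : ∀ x ∈ stab ψ ⊓ gBar B, (∀ k : ↥Bᶜ, Pj k x = 0) → x = 0 := fun x hx hBc =>
    eq_zero_of_mem_stab_of_snd_eq_zero hψ hx.1 <| funext fun k => by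
      by_cases hk : k ∈ B
      · exact (mem_gBar_iff.mp hx.2).2 k hk
      · exact hBc ⟨k, hk⟩
  calc Module.finrank ℝ ↥(stab ψ ⊓ gBar B)
      ≤ ∑ k : ↥Bᶜ, Module.finrank ℝ ↥((stab ψ ⊓ gBar B).map (Pj k)) :=
        Submodule.finrank_le_sum_finrank_map _ (fun k : ↥Bᶜ => Pj k.1) hinj
    _ ≤ ∑ _k : ↥Bᶜ, 1 := Finset.sum_le_sum fun k _ => finrank_map_Pj_stab_inf_gBar_le_one k.1
    _ = n - B.ncard := by
        rw [Finset.sum_const, smul_eq_mul, mul_one, Finset.card_univ, ← Nat.card_eq_fintype_card,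
          Nat.card_coe_set_eq, Set.ncard_compl, Nat.card_eq_fintype_card, Fintype.card_fin]

/-- `dim (K_ψ ∩ ḡ_B) ≤ n − b`, where `B` is the union of all `su(2)` blocks
for `ψ` and `b` is the number of qubits in `B`. -/
theorem stmt8 {n : ℕ} (hn : 1 ≤ n) (ψ : QState n) (hψ : ψ ≠ 0) :
    Module.finrank ℝ ↥(stab ψ ⊓ gBar (blockUnion ψ)) ≤ n - (blockUnion ψ).ncard :=
  stmt8_general ψ hψ
end
end

section
/- For n ≥ 3, the generalized n-qubit GHZ state ψ (with α, β nonzero) has dim_ℝ K_ψ = n − 1. -/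
open scoped Matrix

noncomputable section

section Aux16

private lemma fin2cases : ∀ v : Fin 2, v = 0 ∨ v = 1 := by decide

private def sumL (n : ℕ) : (Fin n → ℝ) →ₗ[ℝ] ℝ where
  toFun a := ∑ j, a j
  map_add' a b := by simp [Finset.sum_add_distrib]
  map_smul' r a := by simp [Finset.mul_sum]

private def embL (n : ℕ) : (Fin n → ℝ) →ₗ[ℝ] GV n where
  toFun a := (0, fun j => a j • matA)
  map_add' a b := by
    refine Prod.ext ?_ ?_
    · simp
    · funext j; simp [add_smul]
  map_smul' r a := by
    refine Prod.ext ?_ ?_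
    · simp
    · funext j; simp [mul_smul]

private lemma embL_inj (n : ℕ) : Function.Injective (embL n) := by
  rw [← LinearMap.ker_eq_bot]
  ext a
  simp only [LinearMap.mem_ker, Submodule.mem_bot, embL, LinearMap.coe_mk, AddHom.coe_mk]
  constructor
  · intro h
    funext j
    have h2 := congrFun (congrFun (congrFun (congrArg Prod.snd h) j) 0) 0
    simp [matA, Matrix.smul_apply, Complex.real_smul, Complex.I_ne_zero,
      Complex.ofReal_eq_zero] at h2
    simpa using h2
  · rintro rfl
    refine Prod.ext rfl ?_
    funext j; simp

private lemma matA_mem_su2 : matA ∈ su2 := by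
  constructor
  · ext i j
    fin_cases i <;> fin_cases j <;>
      simp [matA, Matrix.conjTranspose_apply]
  · simp [Matrix.trace, matA, Fin.sum_univ_two, Matrix.diag]

private lemma ghz_zeros {n : ℕ} (α β : ℂ) : ghz n α β (fun _ => 0) = α := by
  simp [ghz]

private lemma ghz_ones {n : ℕ} (hn : 1 ≤ n) (α β : ℂ) : ghz n α β (fun _ => 1) = β := by
  have h0 : ¬ ∀ j : Fin n, (fun _ => (1 : Fin 2)) j = 0 := by
    intro h
    have := h ⟨0, hn⟩
    simp only at this
    exact absurd this (by decide)
  rw [ghz, if_neg h0, if_pos (fun j => rfl)]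

private lemma ghz_mixed {n : ℕ} (α β : ℂ) {I : Fin n → Fin 2} {j k : Fin n}
    (hj : I j ≠ 0) (hk : I k ≠ 1) : ghz n α β I = 0 := by
  have h1 : ¬ ∀ q, I q = 0 := fun h => hj (h j)
  have h2 : ¬ ∀ q, I q = 1 := fun h => hk (h k)
  simp [ghz, h1, h2]

private lemma exists_third {n : ℕ} (hn : 3 ≤ n) (j q : Fin n) :
    ∃ r, r ≠ j ∧ r ≠ q := by
  have hcard : ({j, q} : Finset (Fin n)).card < Fintype.card (Fin n) := by
    have h2 : ({j, q} : Finset (Fin n)).card ≤ 2 :=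
      (Finset.card_insert_le _ _).trans (by simp)
    simp only [Fintype.card_fin]
    omega
  have hpos : 0 < (({j, q} : Finset (Fin n))ᶜ).card := by
    rw [Finset.card_compl]
    have h2 : ({j, q} : Finset (Fin n)).card ≤ 2 :=
      (Finset.card_insert_le _ _).trans (by simp)
    simp only [Fintype.card_fin]
    omega
  obtain ⟨r, hr⟩ := Finset.card_pos.mp hpos
  rw [Finset.mem_compl, Finset.mem_insert, Finset.mem_singleton] at hr
  push_neg at hr
  exact ⟨r, hr⟩

private lemma stab_ghz_eq {n : ℕ} (hn : 3 ≤ n) (α β : ℂ) (hα : α ≠ 0) (hβ : β ≠ 0) :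
    stab (ghz n α β) = Submodule.map (embL n) (LinearMap.ker (sumL n)) := by
  apply le_antisymm
  · -- forward inclusion
    rintro x ⟨hg, hker⟩
    have hsu : ∀ j, x.2 j ∈ su2 := fun j =>
      (Submodule.mem_pi.mp (Submodule.mem_prod.mp hg).2) j (Set.mem_univ j)
    have hker' : dPhi (ghz n α β) x = 0 := LinearMap.mem_ker.mp hker
    have hE : ∀ I : Fin n → Fin 2, Complex.I * (x.1 : ℂ) * ghz n α β I
        + ∑ j, ∑ k, x.2 j (I j) k * ghz n α β (Function.update I j k) = 0 := by
      intro I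
      have h := congrFun hker' I
      simpa [dPhi, applySingle] using h
    -- off-diagonal entries vanish
    have hoff10 : ∀ j, x.2 j 1 0 = 0 := by
      intro j
      set I : Fin n → Fin 2 := Function.update (fun _ => 0) j 1 with hIdef
      have hIj : I j = 1 := Function.update_self j 1 _
      have hIq : ∀ q, q ≠ j → I q = 0 := fun q hq => Function.update_of_ne hq 1 _
      obtain ⟨r, hrj, _⟩ := exists_third hn j j
      have hψI : ghz n α β I = 0 := by
        refine ghz_mixed α β (j := j) (k := r) ?_ ?_
        · rw [hIj]; decide
        · rw [hIq r hrj]; decide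
      have hsum0 : ∀ q ∈ Finset.univ, q ≠ j →
          (∑ k, x.2 q (I q) k * ghz n α β (Function.update I q k)) = 0 := by
        intro q _ hq
        rw [Fin.sum_univ_two]
        have hu0 : Function.update I q 0 = I := by
          rw [← hIq q hq]; exact Function.update_eq_self q I
        have hu1 : ghz n α β (Function.update I q 1) = 0 := by
          obtain ⟨r, hrj, hrq⟩ := exists_third hn j q
          refine ghz_mixed α β (j := j) (k := r) ?_ ?_
          · rw [Function.update_of_ne (fun h => hq h.symm) 1 I, hIj]; decide
          · rw [Function.update_of_ne hrq 1 I, hIq r hrj]; decide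
        rw [hu0, hu1, hψI]
        ring
      have hEI := hE I
      rw [Finset.sum_eq_single_of_mem j (Finset.mem_univ j) hsum0] at hEI
      rw [Fin.sum_univ_two, hIj] at hEI
      have hu0 : Function.update I j 0 = (fun _ => 0) := by
        rw [hIdef, Function.update_idem]
        exact Function.update_eq_self j _
      have hu1 : Function.update I j 1 = I := by
        rw [← hIj]; exact Function.update_eq_self j I
      rw [hu0, hu1, hψI, ghz_zeros] at hEI
      simp only [mul_zero, add_zero, zero_add] at hEI
      exact (mul_eq_zero.mp hEI).resolve_right hα
    have hoff01 : ∀ j, x.2 j 0 1 = 0 := by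
      intro j
      have h := congrFun (congrFun (hsu j).1 0) 1
      rw [Matrix.conjTranspose_apply, hoff10 j, Matrix.neg_apply] at h
      have h2 : -(x.2 j 0 1) = 0 := by simpa using h.symm
      exact neg_eq_zero.mp h2
    -- diagonal equations at all-zeros and all-ones
    have hdiag0 : Complex.I * (x.1 : ℂ) + ∑ j, x.2 j 0 0 = 0 := by
      have hEI := hE (fun _ => 0)
      have hterm : ∀ j : Fin n,
          (∑ k, x.2 j ((fun _ => (0 : Fin 2)) j) k *
            ghz n α β (Function.update (fun _ => 0) j k)) = x.2 j 0 0 * α := by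
        intro j
        rw [Fin.sum_univ_two]
        have hu0 : Function.update (fun _ => (0 : Fin 2)) j 0 = (fun _ => 0) :=
          Function.update_eq_self j _
        rw [hu0, ghz_zeros, hoff01 j, zero_mul, add_zero]
      rw [Finset.sum_congr rfl (fun j _ => hterm j), ← Finset.sum_mul, ghz_zeros] at hEI
      have : (Complex.I * (x.1 : ℂ) + ∑ j, x.2 j 0 0) * α = 0 := by
        rw [add_mul]; linear_combination hEI
      exact (mul_eq_zero.mp this).resolve_right hα
    have hdiag1 : Complex.I * (x.1 : ℂ) + ∑ j, x.2 j 1 1 = 0 := by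
      have hEI := hE (fun _ => 1)
      have hterm : ∀ j : Fin n,
          (∑ k, x.2 j ((fun _ => (1 : Fin 2)) j) k *
            ghz n α β (Function.update (fun _ => 1) j k)) = x.2 j 1 1 * β := by
        intro j
        rw [Fin.sum_univ_two]
        have hu1 : Function.update (fun _ => (1 : Fin 2)) j 1 = (fun _ => 1) :=
          Function.update_eq_self j _
        rw [hu1, ghz_ones (by omega) α β, hoff10 j, zero_mul, zero_add]
      rw [Finset.sum_congr rfl (fun j _ => hterm j), ← Finset.sum_mul,
        ghz_ones (by omega) α β] at hEI
      have : (Complex.I * (x.1 : ℂ) + ∑ j, x.2 j 1 1) * β = 0 := by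
        rw [add_mul]; linear_combination hEI
      exact (mul_eq_zero.mp this).resolve_right hβ
    have htr : ∀ j, x.2 j 1 1 = -(x.2 j 0 0) := by
      intro j
      have h := (hsu j).2
      rw [Matrix.trace_fin_two] at h
      linear_combination h
    have htI : Complex.I * (x.1 : ℂ) = 0 := by
      have hs : (∑ j, x.2 j 1 1) = -∑ j, x.2 j 0 0 := by
        rw [← Finset.sum_neg_distrib]
        exact Finset.sum_congr rfl (fun j _ => htr j)
      rw [hs] at hdiag1
      linear_combination (hdiag0 + hdiag1) / 2
    have ht : x.1 = 0 := by
      have hc : ((x.1 : ℂ)) = 0 := by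
        rcases mul_eq_zero.mp htI with h | h
        · exact absurd h Complex.I_ne_zero
        · exact h
      exact_mod_cast hc
    have hS : (∑ j, x.2 j 0 0) = 0 := by
      rw [htI, zero_add] at hdiag0
      exact hdiag0
    have hre : ∀ j, (x.2 j 0 0).re = 0 := by
      intro j
      have h := congrFun (congrFun (hsu j).1 0) 0
      rw [Matrix.conjTranspose_apply, Matrix.neg_apply] at h
      have h2 := congrArg Complex.re h
      simp only [Complex.star_def, Complex.conj_re, Complex.neg_re] at h2
      linarith
    have hdiagj : ∀ j, ((x.2 j 0 0).im : ℂ) * Complex.I = x.2 j 0 0 := by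
      intro j
      apply Complex.ext <;> simp [hre j]
    refine ⟨fun j => (x.2 j 0 0).im, ?_, ?_⟩
    · refine LinearMap.mem_ker.mpr ?_
      show (∑ j, (x.2 j 0 0).im) = 0
      have h2 := congrArg Complex.im hS
      simpa [Complex.im_sum] using h2
    · refine Prod.ext (by simp [embL, ht]) ?_
      funext j
      show (x.2 j 0 0).im • matA = x.2 j
      ext i k
      fin_cases i <;> fin_cases k
      · show (x.2 j 0 0).im • matA 0 0 = x.2 j 0 0
        rw [show matA 0 0 = Complex.I by simp [matA], Complex.real_smul]
        exact hdiagj j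
      · show (x.2 j 0 0).im • matA 0 1 = x.2 j 0 1
        rw [show matA 0 1 = 0 by simp [matA], hoff01 j, smul_zero]
      · show (x.2 j 0 0).im • matA 1 0 = x.2 j 1 0
        rw [show matA 1 0 = 0 by simp [matA], hoff10 j, smul_zero]
      · show (x.2 j 0 0).im • matA 1 1 = x.2 j 1 1
        rw [show matA 1 1 = -Complex.I by simp [matA], htr j, smul_neg,
          Complex.real_smul, hdiagj j]
  · -- reverse inclusion
    rintro x ⟨a, ha, rfl⟩
    have haS : (∑ j, a j) = 0 := by simpa [sumL] using (LinearMap.mem_ker.mp ha)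
    refine Submodule.mem_inf.mpr ⟨?_, ?_⟩
    · exact Submodule.mem_prod.mpr ⟨trivial,
        Submodule.mem_pi.mpr fun j _ => su2.smul_mem (a j) matA_mem_su2⟩
    · rw [LinearMap.mem_ker]
      funext I
      show Complex.I * ((0 : ℝ) : ℂ) * ghz n α β I
        + ∑ j, applySingle j (a j • matA) (ghz n α β) I = 0
      have hterm : ∀ j : Fin n, applySingle j (a j • matA) (ghz n α β) I
          = (a j : ℂ) * (if I j = 0 then Complex.I else -Complex.I) * ghz n α β I := by
        intro j
        rw [applySingle, Fin.sum_univ_two]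
        rcases fin2cases (I j) with h | h
        · have hu : Function.update I j 0 = I := by
            rw [← h]; exact Function.update_eq_self j I
          rw [h, hu]
          simp [matA, Complex.real_smul]
        · have hu : Function.update I j 1 = I := by
            rw [← h]; exact Function.update_eq_self j I
          rw [h, hu]
          simp [matA, Complex.real_smul]
      rw [Finset.sum_congr rfl (fun j _ => hterm j)]
      by_cases h0 : ∀ q, I q = 0
      · have : ∀ j ∈ Finset.univ, (a j : ℂ) * (if I j = 0 then Complex.I else -Complex.I)
            * ghz n α β I = (a j : ℂ) * (Complex.I * ghz n α β I) := by
          intro j _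
          rw [if_pos (h0 j)]; ring
        rw [Finset.sum_congr rfl this, ← Finset.sum_mul]
        have hc : (∑ i, (a i : ℂ)) = 0 := by exact_mod_cast haS
        rw [hc]
        simp
      · by_cases h1 : ∀ q, I q = 1
        · have : ∀ j ∈ Finset.univ, (a j : ℂ) * (if I j = 0 then Complex.I else -Complex.I)
              * ghz n α β I = (a j : ℂ) * (-Complex.I * ghz n α β I) := by
            intro j _
            rw [if_neg (by rw [h1 j]; decide)]; ring
          rw [Finset.sum_congr rfl this, ← Finset.sum_mul]
          have hc : (∑ i, (a i : ℂ)) = 0 := by exact_mod_cast haS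
          rw [hc]
          simp
        · have hz : ghz n α β I = 0 := by rw [ghz, if_neg h0, if_neg h1]
          simp [hz]

end Aux16

/-- For `n ≥ 3`, the generalized `n`-qubit GHZ state (with `α, β ≠ 0`)
has stabilizer dimension `n − 1`. -/
theorem stmt16 {n : ℕ} (hn : 3 ≤ n) (α β : ℂ) (hα : α ≠ 0) (hβ : β ≠ 0) :
    Module.finrank ℝ ↥(stab (ghz n α β)) = n - 1 := by
  rw [stab_ghz_eq hn α β hα hβ,
    ← LinearEquiv.finrank_eq (Submodule.equivMapOfInjective (embL n) (embL_inj n)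
      (LinearMap.ker (sumL n)))]
  have hsurj : Function.Surjective (sumL n) := by
    intro y
    refine ⟨Pi.single ⟨0, by omega⟩ y, ?_⟩
    show (∑ j, Pi.single (⟨0, by omega⟩ : Fin n) y j) = y
    simp
  have h1 : Module.finrank ℝ ↥(LinearMap.range (sumL n)) = 1 := by
    rw [LinearMap.range_eq_top.mpr hsurj]
    simp
  have h2 := LinearMap.finrank_range_add_finrank_ker (sumL n)
  rw [h1, Module.finrank_fin_fun] at h2
  omega
end
end
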